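/- Let φ : X → Y be a code between shift spaces with X a shift of finite type. If φ is open, then φ has a uniform lifting length. -/

import Mathlib

open Set Filter

/-- The product topology on `ℤ → A`, where the alphabet `A` carries the
discrete topology. -/
def seqTop (A : Type*) : TopologicalSpace (ℤ → A) :=
  @Pi.topologicalSpace ℤ (fun _ => A) (fun _ => ⊥)

/-- The shift map `σ`, defined by `σ(x)_i = x_{i+1}`. -/
def shiftMap {A : Type*} (x : ℤ → A) : ℤ → A := fun i => x (i + 1)

/-- A shift space: a nonempty, closed, shift-invariant subset of `A^ℤ`. -/
def IsShiftSpace {A : Type*} (X : Set (ℤ → A)) : Prop :=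
  X.Nonempty ∧ @IsClosed _ (seqTop A) X ∧ shiftMap '' X = X

/-- The word `u` occurs in `x` at coordinate `i`. -/
def OccursAt {A : Type*} (x : ℤ → A) (u : List A) (i : ℤ) : Prop :=
  ∀ k : Fin u.length, x (i + ((k : ℕ) : ℤ)) = u.get k

/-- `u` is a word of the language `B(X)` of `X`. -/
def IsWordOf {A : Type*} (X : Set (ℤ → A)) (u : List A) : Prop :=
  ∃ x ∈ X, OccursAt x u 0

/-- A shift of finite type: a shift space defined by finitely many
forbidden words. -/
def IsSFT {A : Type*} (X : Set (ℤ → A)) : Prop :=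
  IsShiftSpace X ∧ ∃ F : Finset (List A),
    X = { x | ∀ u ∈ F, ∀ i : ℤ, ¬ OccursAt x u i }

/-- A code: a continuous shift-commuting map from `X` to `Y`. -/
def IsCode {A B : Type*} (X : Set (ℤ → A)) (Y : Set (ℤ → B))
    (φ : (ℤ → A) → (ℤ → B)) : Prop :=
  Set.MapsTo φ X Y ∧ @ContinuousOn _ _ (seqTop A) (seqTop B) φ X ∧
    ∀ x ∈ X, φ (shiftMap x) = shiftMap (φ x)

/-- A factor code: a surjective code. -/
def IsFactorCode {A B : Type*} (X : Set (ℤ → A)) (Y : Set (ℤ → B))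
    (φ : (ℤ → A) → (ℤ → B)) : Prop :=
  IsCode X Y φ ∧ Y ⊆ φ '' X

/-- A code is open if it maps (relatively) open subsets of `X` to
(relatively) open subsets of `Y`. -/
def IsOpenCode {A B : Type*} (X : Set (ℤ → A)) (Y : Set (ℤ → B))
    (φ : (ℤ → A) → (ℤ → B)) : Prop :=
  ∀ U : Set (ℤ → A), @IsOpen _ (seqTop A) U →
    ∃ V : Set (ℤ → B), @IsOpen _ (seqTop B) V ∧ φ '' (X ∩ U) = Y ∩ V

/-- A code has a uniform lifting length `l`. -/
def HasUniformLiftingLength {A B : Type*} (X : Set (ℤ → A)) (Y : Set (ℤ → B))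
    (φ : (ℤ → A) → (ℤ → B)) : Prop :=
  ∃ l : ℕ, ∀ k : ℕ, ∀ x ∈ X, ∀ y ∈ Y,
    (∀ i : ℤ, |i| ≤ (k : ℤ) + (l : ℤ) → φ x i = y i) →
    ∃ x' ∈ X, (∀ i : ℤ, |i| ≤ (k : ℤ) → x' i = x i) ∧ φ x' = y

/-- Right continuing code. -/
def IsRightContinuing {A B : Type*} (X : Set (ℤ → A)) (Y : Set (ℤ → B))
    (φ : (ℤ → A) → (ℤ → B)) : Prop :=
  ∀ x ∈ X, ∀ y ∈ Y, (∃ M : ℤ, ∀ i ≤ M, φ x i = y i) →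
    ∃ x' ∈ X, (∃ M : ℤ, ∀ i ≤ M, x' i = x i) ∧ φ x' = y

/-- Left continuing code. -/
def IsLeftContinuing {A B : Type*} (X : Set (ℤ → A)) (Y : Set (ℤ → B))
    (φ : (ℤ → A) → (ℤ → B)) : Prop :=
  ∀ x ∈ X, ∀ y ∈ Y, (∃ M : ℤ, ∀ i, M ≤ i → φ x i = y i) →
    ∃ x' ∈ X, (∃ M : ℤ, ∀ i, M ≤ i → x' i = x i) ∧ φ x' = y

/-- `n` is a right continuing retract of `φ`. -/
def IsRightRetract {A B : Type*} (X : Set (ℤ → A)) (Y : Set (ℤ → B))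
    (φ : (ℤ → A) → (ℤ → B)) (n : ℕ) : Prop :=
  ∀ x ∈ X, ∀ y ∈ Y, (∀ i : ℤ, i ≤ 0 → φ x i = y i) →
    ∃ x' ∈ X, φ x' = y ∧ ∀ i : ℤ, i ≤ -(n : ℤ) → x' i = x i

/-- `n` is a left continuing retract of `φ`. -/
def IsLeftRetract {A B : Type*} (X : Set (ℤ → A)) (Y : Set (ℤ → B))
    (φ : (ℤ → A) → (ℤ → B)) (n : ℕ) : Prop :=
  ∀ x ∈ X, ∀ y ∈ Y, (∀ i : ℤ, 0 ≤ i → φ x i = y i) →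
    ∃ x' ∈ X, φ x' = y ∧ ∀ i : ℤ, (n : ℤ) ≤ i → x' i = x i

/-- Right closing code. -/
def IsRightClosing {A B : Type*} (X : Set (ℤ → A))
    (φ : (ℤ → A) → (ℤ → B)) : Prop :=
  ∀ x ∈ X, ∀ x' ∈ X, (∃ M : ℤ, ∀ i ≤ M, x i = x' i) → φ x = φ x' → x = x'

/-- Left closing code. -/
def IsLeftClosing {A B : Type*} (X : Set (ℤ → A))
    (φ : (ℤ → A) → (ℤ → B)) : Prop :=
  ∀ x ∈ X, ∀ x' ∈ X, (∃ M : ℤ, ∀ i, M ≤ i → x i = x' i) → φ x = φ x' → x = x'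

/-- A sofic shift: a factor of a shift of finite type. -/
def IsSofic {B : Type*} (Y : Set (ℤ → B)) : Prop :=
  ∃ (C : Type) (_ : Fintype C) (Z : Set (ℤ → C)) (π : (ℤ → C) → (ℤ → B)),
    IsSFT Z ∧ IsFactorCode Z Y π

/-- Irreducibility of a shift space. -/
def IsIrreducibleShift {A : Type*} (X : Set (ℤ → A)) : Prop :=
  ∀ u v : List A, IsWordOf X u → IsWordOf X v →
    ∃ w : List A, IsWordOf X (u ++ w ++ v)

/-- Mixing shift space. -/
def IsMixingShift {A : Type*} (X : Set (ℤ → A)) : Prop :=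
  ∀ u v : List A, IsWordOf X u → IsWordOf X v →
    ∃ N : ℕ, ∀ n : ℕ, N ≤ n →
      ∃ w : List A, w.length = n ∧ IsWordOf X (u ++ w ++ v)

/-- The almost specification property. -/
def AlmostSpecified {A : Type*} (X : Set (ℤ → A)) : Prop :=
  ∃ N : ℕ, ∀ u v : List A, IsWordOf X u → IsWordOf X v →
    ∃ w : List A, w.length ≤ N ∧ IsWordOf X (u ++ w ++ v)

/-- The specification property. -/
def HasSpecification {A : Type*} (X : Set (ℤ → A)) : Prop :=
  ∃ N : ℕ, ∀ u v : List A, IsWordOf X u → IsWordOf X v →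
    ∃ w : List A, w.length = N ∧ IsWordOf X (u ++ w ++ v)

/-- A synchronizing word of `X`. -/
def IsSynchronizingWord {A : Type*} (X : Set (ℤ → A)) (v : List A) : Prop :=
  IsWordOf X v ∧ ∀ u w : List A, IsWordOf X (u ++ v) → IsWordOf X (v ++ w) →
    IsWordOf X (u ++ v ++ w)

/-- A synchronized system: an irreducible shift space with a synchronizing
word. -/
def IsSynchronizedSystem {A : Type*} (X : Set (ℤ → A)) : Prop :=
  IsIrreducibleShift X ∧ ∃ v : List A, IsSynchronizingWord X v

/-- A subshift of `X`. -/
def IsSubshiftOf {A : Type*} (X' X : Set (ℤ → A)) : Prop :=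
  IsShiftSpace X' ∧ X' ⊆ X

/-- The number of words of length `n` in the language of `X`. -/
noncomputable def wordCount {A : Type*} (X : Set (ℤ → A)) (n : ℕ) : ℕ :=
  Set.ncard { u : List A | u.length = n ∧ IsWordOf X u }

/-- The entropy `h(X) = lim (1/n) log |B_n(X)|` of a shift space (the limit
exists by subadditivity, hence equals the limsup used here). -/
noncomputable def entropy {A : Type*} (X : Set (ℤ → A)) : ℝ :=
  Filter.limsup (fun n : ℕ => Real.log (wordCount X n) / (n : ℝ)) Filter.atTop

/-- The periodic condition `P(X) ↘ P(Y)`. -/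
def PeriodicCondition {A B : Type*} (X : Set (ℤ → A)) (Y : Set (ℤ → B)) : Prop :=
  ∀ n : ℕ, 0 < n → (∃ x ∈ X, shiftMap^[n] x = x) → ∃ y ∈ Y, shiftMap^[n] y = y

/-- A cyclic cover `D_0, …, D_{p-1}` of a shift space `X`. -/
def IsCyclicCover {A : Type*} (X : Set (ℤ → A)) (p : ℕ)
    (D : ZMod p → Set (ℤ → A)) : Prop :=
  0 < p ∧
  (∀ i, @IsClosed _ (seqTop A) (D i) ∧ D i ⊆ X) ∧
  (⋃ i, D i) = X ∧
  (∀ i, shiftMap '' D i = D (i + 1)) ∧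
  (∀ i, ∀ U V : Set (ℤ → A), @IsOpen _ (seqTop A) U → @IsOpen _ (seqTop A) V →
    (D i ∩ U).Nonempty → (D i ∩ V).Nonempty →
    ∃ N : ℕ, ∀ n : ℕ, N ≤ n →
      ((shiftMap^[p * n] '' (D i ∩ U)) ∩ (D i ∩ V)).Nonempty) ∧
  (∀ i j, i ≠ j → ∀ U : Set (ℤ → A), @IsOpen _ (seqTop A) U →
    X ∩ U ⊆ D i ∩ D j → X ∩ U = ∅)

/-- A left ray of `X`, recorded as `z : ℕ → A` where `z n` is the symbol at
coordinate `-(n+1)`. -/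
def IsLeftRay {A : Type*} (X : Set (ℤ → A)) (z : ℕ → A) : Prop :=
  ∃ x ∈ X, ∀ n : ℕ, x (-((n : ℤ) + 1)) = z n

/-- Append the finite word `w` on the right of a left-infinite sequence `z`
(the last symbol of `w` ends up at coordinate `-1`). -/
def rayAppend {A : Type*} (z : ℕ → A) (w : List A) : ℕ → A :=
  fun n => if h : n < w.length then w.reverse.get ⟨n, by simpa using h⟩
           else z (n - w.length)

/-- A left transitive point: every word of `X` occurs in `x_{(-∞,0]}`. -/
def IsLeftTransitive {A : Type*} (X : Set (ℤ → A)) (x : ℤ → A) : Prop :=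
  ∀ u : List A, IsWordOf X u → ∃ i : ℤ, i + (u.length : ℤ) ≤ 1 ∧ OccursAt x u i

/-- A right transitive point: every word of `X` occurs in `x_{[0,∞)}`. -/
def IsRightTransitive {A : Type*} (X : Set (ℤ → A)) (x : ℤ → A) : Prop :=
  ∀ u : List A, IsWordOf X u → ∃ i : ℤ, 0 ≤ i ∧ OccursAt x u i

/-- Right continuing almost everywhere. -/
def IsRightContinuingAE {A B : Type*} (X : Set (ℤ → A)) (Y : Set (ℤ → B))
    (φ : (ℤ → A) → (ℤ → B)) : Prop :=
  ∀ x ∈ X, IsLeftTransitive X x → ∀ y ∈ Y, (∃ M : ℤ, ∀ i ≤ M, φ x i = y i) →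
    ∃ x' ∈ X, (∃ M : ℤ, ∀ i ≤ M, x' i = x i) ∧ φ x' = y

/-- Left continuing almost everywhere. -/
def IsLeftContinuingAE {A B : Type*} (X : Set (ℤ → A)) (Y : Set (ℤ → B))
    (φ : (ℤ → A) → (ℤ → B)) : Prop :=
  ∀ x ∈ X, IsRightTransitive X x → ∀ y ∈ Y, (∃ M : ℤ, ∀ i, M ≤ i → φ x i = y i) →
    ∃ x' ∈ X, (∃ M : ℤ, ∀ i, M ≤ i → x' i = x i) ∧ φ x' = y

/-- The bi-infinite concatenations of blocks `1 0^s`, `s ∈ S`: the positions of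
`1`s in `x` form the range of a strictly monotone `t : ℤ → ℤ` whose
consecutive gaps `t (n+1) - t n` all equal `s + 1` for some `s ∈ S`. -/
def GapConcat (S : Set ℕ) : Set (ℤ → Bool) :=
  { x | ∃ t : ℤ → ℤ, StrictMono t ∧ (∀ n : ℤ, ∃ s ∈ S, t (n + 1) = t n + (s : ℤ) + 1) ∧
      (∀ i : ℤ, x i = true ↔ ∃ n : ℤ, t n = i) }

/-- The `S`-gap shift: the smallest shift space over `{0,1}` containing all
bi-infinite concatenations of blocks from `{1 0^s : s ∈ S}`. -/
def SGapShift (S : Set ℕ) : Set (ℤ → Bool) :=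
  ⋂₀ { X : Set (ℤ → Bool) | IsShiftSpace X ∧ GapConcat S ⊆ X }

/-! Openness and compactness give, for every radius `r`, a radius `m` such that every `y ∈ Y`
agreeing with `φ x` on `[c - m, c + m]` lifts to a point of `X` agreeing with `x` on
`[c - r, c + r]`; shift invariance makes `m` independent of the centre `c`. When `φ x` and `y`
agree on a long window `[-k - l, k + l]`, lift `y` near each end `±k` of the window and splice the
two lifts onto `x` at `±k`. Splicing two points that agree on a window of radius
`r = N + M` around the cut, where `N` is the block radius of `φ` and `M` the length of the longest
forbidden word, stays in `X` and splices the images, so the result lies in `X`, maps to `y` and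
agrees with `x` on `[-k, k]`. -/

attribute [local instance] seqTop

section Cylinders

variable {A : Type*}

def cylSet (x : ℤ → A) (k : ℕ) : Set (ℤ → A) :=
  {z | EqOn z x (Icc (-(k : ℤ)) k)}

lemma mem_cylSet_self (x : ℤ → A) (k : ℕ) : x ∈ cylSet x k := fun _ _ => rfl

lemma mem_cylSet_comm {x z : ℤ → A} {k : ℕ} : z ∈ cylSet x k ↔ x ∈ cylSet z k :=
  ⟨EqOn.symm, EqOn.symm⟩

lemma mem_cylSet_trans {x y z : ℤ → A} {k : ℕ} (hz : z ∈ cylSet y k) (hy : y ∈ cylSet x k) :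
    z ∈ cylSet x k :=
  hz.trans hy

lemma cylSet_anti (x : ℤ → A) {k n : ℕ} (hkn : k ≤ n) : cylSet x n ⊆ cylSet x k :=
  fun _ hz => hz.mono (Icc_subset_Icc (by omega) (by omega))

lemma cylSet_subset_of_mem {x x₀ : ℤ → A} {k n : ℕ} (hx : x ∈ cylSet x₀ n) (hnk : n ≤ k) :
    cylSet x k ⊆ cylSet x₀ n :=
  fun _ hz => mem_cylSet_trans (cylSet_anti x hnk hz) hx

lemma cylSet_eq_pi (x : ℤ → A) (k : ℕ) :
    cylSet x k = (Icc (-(k : ℤ)) k).pi fun i => {x i} := by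
  ext z
  simp [cylSet, EqOn, Set.mem_pi]

lemma isOpen_cylSet (x : ℤ → A) (k : ℕ) : IsOpen (cylSet x k) := by
  let : TopologicalSpace A := ⊥
  have : DiscreteTopology A := ⟨rfl⟩
  rw [cylSet_eq_pi]
  exact isOpen_set_pi (finite_Icc _ _) fun i _ => isOpen_discrete _

lemma nhds_basis_cylSet (x : ℤ → A) : (nhds x).HasBasis (fun _ : ℕ => True) (cylSet x) := by
  let : TopologicalSpace A := ⊥
  have : DiscreteTopology A := ⟨rfl⟩
  refine ⟨fun t => ⟨fun ht => ?_, fun ⟨k, _, hk⟩ =>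
    Filter.mem_of_superset ((isOpen_cylSet x k).mem_nhds (mem_cylSet_self x k)) hk⟩⟩
  obtain ⟨I, u, hxu, hut⟩ :=
    isOpen_pi_iff.1 (isOpen_interior (s := t)) x (mem_interior_iff_mem_nhds.2 ht)
  refine ⟨I.sup Int.natAbs, trivial, fun z hz => interior_subset (hut fun i hi => ?_)⟩
  have : i.natAbs ≤ I.sup Int.natAbs := Finset.le_sup hi
  rw [hz (by simp only [mem_Icc]; omega)]
  exact (hxu i hi).2

instance compactSpace_seqTop [Finite A] : CompactSpace (ℤ → A) := by
  let : TopologicalSpace A := ⊥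
  exact Pi.compactSpace

lemma IsCompact.exists_cylSet_radius {K : Set (ℤ → A)} (hK : IsCompact K) (n : (ℤ → A) → ℕ) :
    ∃ m : ℕ, ∀ x ∈ K, ∃ x₀ ∈ K, n x₀ ≤ m ∧ x ∈ cylSet x₀ (n x₀) := by
  obtain ⟨t, htK, hcov⟩ := hK.elim_nhds_subcover (fun x => cylSet x (n x))
    fun x _ => (isOpen_cylSet x (n x)).mem_nhds (mem_cylSet_self x (n x))
  refine ⟨t.sup n, fun x hx => ?_⟩
  obtain ⟨x₀, hx₀t, hxx₀⟩ := mem_iUnion₂.1 (hcov hx)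
  exact ⟨x₀, htK x₀ hx₀t, Finset.le_sup hx₀t, hxx₀⟩

lemma ContinuousOn.exists_cylSet_radius {B : Type*} {X : Set (ℤ → A)}
    {φ : (ℤ → A) → (ℤ → B)} (hφ : ContinuousOn φ X) {x : ℤ → A} (hx : x ∈ X) (k : ℕ) :
    ∃ n : ℕ, ∀ z ∈ X, z ∈ cylSet x n → φ z ∈ cylSet (φ x) k := by
  obtain ⟨n, -, hn⟩ := ((nhdsWithin_hasBasis (nhds_basis_cylSet x) X).tendsto_iff
    (nhds_basis_cylSet (φ x))).1 (hφ x hx) k trivial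
  exact ⟨n, fun z hz hzx => hn z ⟨hzx, hz⟩⟩

end Cylinders

lemma Int.forall_of_add_one_iff {P : ℤ → Prop} (h₀ : P 0) (h : ∀ n, P (n + 1) ↔ P n) (n : ℤ) :
    P n := by
  induction n with
  | zero => exact h₀
  | succ i ih => exact (h _).2 ih
  | pred i ih => exact (h _).1 (by rwa [sub_add_cancel])

section Shifts

variable {A B : Type*}

def shiftBy (n : ℤ) (x : ℤ → A) : ℤ → A := fun i => x (i + n)

@[simp]
lemma shiftBy_zero (x : ℤ → A) : shiftBy 0 x = x :=
  funext fun i => congrArg x (add_zero i)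

lemma shiftBy_add_one (n : ℤ) (x : ℤ → A) : shiftBy (n + 1) x = shiftMap (shiftBy n x) :=
  funext fun i => congrArg x (by ring)

lemma shiftBy_shiftBy (m n : ℤ) (x : ℤ → A) : shiftBy m (shiftBy n x) = shiftBy (m + n) x :=
  funext fun _ => congrArg x (add_assoc _ _ _)

lemma shiftMap_injective : Function.Injective (shiftMap (A := A)) := fun x z h =>
  funext fun i => by simpa [shiftMap] using congrFun h (i - 1)

lemma shiftMap_mem_iff {X : Set (ℤ → A)} (hX : shiftMap '' X = X) {x : ℤ → A} :
    shiftMap x ∈ X ↔ x ∈ X := by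
  conv_lhs => rw [← hX]
  exact shiftMap_injective.mem_set_image

lemma shiftBy_mem {X : Set (ℤ → A)} (hX : shiftMap '' X = X) {x : ℤ → A} (hx : x ∈ X) (n : ℤ) :
    shiftBy n x ∈ X :=
  Int.forall_of_add_one_iff (P := fun n => shiftBy n x ∈ X) (by simpa using hx)
    (fun n => by simp only [shiftBy_add_one, shiftMap_mem_iff hX]) n

lemma map_shiftBy {X : Set (ℤ → A)} (hX : shiftMap '' X = X) {φ : (ℤ → A) → (ℤ → B)}
    (hφ : ∀ x ∈ X, φ (shiftMap x) = shiftMap (φ x)) {x : ℤ → A} (hx : x ∈ X) (n : ℤ) :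
    φ (shiftBy n x) = shiftBy n (φ x) :=
  Int.forall_of_add_one_iff (P := fun n => φ (shiftBy n x) = shiftBy n (φ x)) (by simp)
    (fun n => by
      simp only [shiftBy_add_one, hφ _ (shiftBy_mem hX hx n), shiftMap_injective.eq_iff]) n

lemma shiftBy_mem_cylSet_iff (c : ℤ) (z x : ℤ → A) (k : ℕ) :
    shiftBy c z ∈ cylSet (shiftBy c x) k ↔ EqOn z x (Icc (c - k) (c + k)) := by
  refine ⟨fun h i hi => ?_, fun h i hi => h ?_⟩
  · simpa [shiftBy] using @h (i - c) (by simp only [mem_Icc] at hi ⊢; omega)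
  · simp only [mem_Icc] at hi ⊢; omega

end Shifts

section Codes

variable {A B : Type*} {X : Set (ℤ → A)} {Y : Set (ℤ → B)} {φ : (ℤ → A) → (ℤ → B)}

def IsBlockRadius (X : Set (ℤ → A)) (φ : (ℤ → A) → (ℤ → B)) (N : ℕ) : Prop :=
  ∀ x ∈ X, ∀ z ∈ X, ∀ i : ℤ, EqOn z x (Icc (i - N) (i + N)) → φ z i = φ x i

lemma exists_isBlockRadius [Finite A] (hXcl : IsClosed X) (hXsh : shiftMap '' X = X)
    (hc : ContinuousOn φ X) (hcomm : ∀ x ∈ X, φ (shiftMap x) = shiftMap (φ x)) :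
    ∃ N : ℕ, IsBlockRadius X φ N := by
  choose! n hn using fun x (hx : x ∈ X) => hc.exists_cylSet_radius hx 0
  obtain ⟨N, hN⟩ := hXcl.isCompact.exists_cylSet_radius n
  refine ⟨N, fun x hx z hz i hzx => ?_⟩
  have hφ_eval : ∀ w ∈ X, φ w i = φ (shiftBy i w) 0 := fun w hw => by
    rw [map_shiftBy hXsh hcomm hw]; simp [shiftBy]
  have hx' := shiftBy_mem hXsh hx i
  obtain ⟨x₀, hx₀, hnN, hxx₀⟩ := hN _ hx'
  have hzx₀ : shiftBy i z ∈ cylSet x₀ (n x₀) :=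
    cylSet_subset_of_mem hxx₀ hnN ((shiftBy_mem_cylSet_iff i z x N).2 hzx)
  rw [hφ_eval z hz, hφ_eval x hx, hn x₀ hx₀ _ (shiftBy_mem hXsh hz i) hzx₀ (by simp),
    hn x₀ hx₀ _ hx' hxx₀ (by simp)]

lemma IsOpenCode.exists_local_lift_radius (hopen : IsOpenCode X Y φ) (hc : ContinuousOn φ X)
    {x : ℤ → A} (hx : x ∈ X) (r : ℕ) :
    ∃ n : ℕ, ∀ x' ∈ X, x' ∈ cylSet x n → ∀ y ∈ Y, y ∈ cylSet (φ x') n →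
      ∃ x'' ∈ X, x'' ∈ cylSet x' r ∧ φ x'' = y := by
  obtain ⟨V, hV, hXV⟩ := hopen (cylSet x r) (isOpen_cylSet x r)
  have hφx : φ x ∈ Y ∩ V := hXV ▸ mem_image_of_mem φ ⟨hx, mem_cylSet_self x r⟩
  obtain ⟨a, -, ha⟩ := (nhds_basis_cylSet (φ x)).mem_iff.1 (hV.mem_nhds hφx.2)
  obtain ⟨b, hb⟩ := hc.exists_cylSet_radius hx a
  refine ⟨max r (max a b), fun x' hx' hx'x y hy hyx' => ?_⟩
  have hyV : y ∈ Y ∩ V := ⟨hy, ha <| mem_cylSet_trans (cylSet_anti _ (by omega) hyx')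
    (hb x' hx' (cylSet_anti _ (by omega) hx'x))⟩
  rw [← hXV] at hyV
  obtain ⟨x'', ⟨hx'', hx''x⟩, rfl⟩ := hyV
  exact ⟨x'', hx'', mem_cylSet_trans hx''x (mem_cylSet_comm.1 (cylSet_anti _ (by omega) hx'x)),
    rfl⟩

lemma IsOpenCode.exists_lift_radius [Finite A] (hopen : IsOpenCode X Y φ) (hXcl : IsClosed X)
    (hc : ContinuousOn φ X) (r : ℕ) :
    ∃ m : ℕ, ∀ x ∈ X, ∀ y ∈ Y, y ∈ cylSet (φ x) m → ∃ x' ∈ X, x' ∈ cylSet x r ∧ φ x' = y := by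
  choose! n hn using fun x (hx : x ∈ X) => hopen.exists_local_lift_radius hc hx r
  obtain ⟨m, hm⟩ := hXcl.isCompact.exists_cylSet_radius n
  refine ⟨m, fun x hx y hy hyx => ?_⟩
  obtain ⟨x₀, hx₀, hnm, hxx₀⟩ := hm x hx
  exact hn x₀ hx₀ x hx hxx₀ y hy (cylSet_anti _ hnm hyx)

lemma IsOpenCode.exists_lift_radius_at [Finite A] (hopen : IsOpenCode X Y φ) (hXcl : IsClosed X)
    (hXsh : shiftMap '' X = X) (hYsh : shiftMap '' Y = Y) (hc : ContinuousOn φ X)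
    (hcomm : ∀ x ∈ X, φ (shiftMap x) = shiftMap (φ x)) (r : ℕ) :
    ∃ m : ℕ, ∀ c : ℤ, ∀ x ∈ X, ∀ y ∈ Y, EqOn y (φ x) (Icc (c - m) (c + m)) →
      ∃ x' ∈ X, EqOn x' x (Icc (c - r) (c + r)) ∧ φ x' = y := by
  obtain ⟨m, hm⟩ := hopen.exists_lift_radius hXcl hc r
  refine ⟨m, fun c x hx y hy hyx => ?_⟩
  rw [← shiftBy_mem_cylSet_iff, ← map_shiftBy hXsh hcomm hx] at hyx
  obtain ⟨x', hx', hx'x, hφx'⟩ := hm _ (shiftBy_mem hXsh hx c) _ (shiftBy_mem hYsh hy c) hyx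
  rw [show x' = shiftBy c (shiftBy (-c) x') by simp [shiftBy_shiftBy]] at hx'x
  refine ⟨shiftBy (-c) x', shiftBy_mem hXsh hx' (-c), (shiftBy_mem_cylSet_iff _ _ _ _).1 hx'x, ?_⟩
  rw [map_shiftBy hXsh hcomm hx', hφx', shiftBy_shiftBy, neg_add_cancel, shiftBy_zero]

end Codes

section Splice

variable {A B : Type*}

def splice (z z' : ℤ → A) (a : ℤ) : ℤ → A := fun i => if i < a then z i else z' i

lemma eqOn_splice_right (z z' : ℤ → A) (a : ℤ) : EqOn (splice z z' a) z' (Ici a) :=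
  fun _ hi => if_neg (not_lt.2 hi)

lemma eqOn_splice_of_eqOn {z z' : ℤ → A} {a b : ℤ} (h : EqOn z' z (Icc a b)) :
    EqOn (splice z z' a) z (Iic b) := fun i hi => by
  by_cases hia : i < a
  · exact if_pos hia
  · exact (if_neg hia).trans (h ⟨not_lt.1 hia, hi⟩)

lemma splice_mem_of_forbidden {X : Set (ℤ → A)} {F : Finset (List A)}
    (hF : X = {x | ∀ u ∈ F, ∀ i : ℤ, ¬ OccursAt x u i}) {z z' : ℤ → A} (hz : z ∈ X)
    (hz' : z' ∈ X) {a : ℤ} (h : EqOn z z' (Ico a (a + (F.sup List.length : ℕ)))) :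
    splice z z' a ∈ X := by
  rw [hF] at hz hz' ⊢
  intro u hu j hocc
  have hlen : u.length ≤ F.sup List.length := Finset.le_sup hu
  by_cases hj : a ≤ j
  · refine hz' u hu j fun t => ?_
    rw [← hocc t, splice, if_neg (by omega)]
  · refine hz u hu j fun t => ?_
    rw [← hocc t, splice]
    split_ifs with ht
    · rfl
    · exact h ⟨by omega, by have := t.isLt; omega⟩

lemma IsBlockRadius.map_splice {X : Set (ℤ → A)} {φ : (ℤ → A) → (ℤ → B)} {N : ℕ}
    (hN : IsBlockRadius X φ N) {z z' : ℤ → A} (hz : z ∈ X) (hz' : z' ∈ X) {a : ℤ}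
    (hs : splice z z' a ∈ X) (h : EqOn z z' (Icc (a - N) (a + N))) :
    φ (splice z z' a) = splice (φ z) (φ z') a := by
  funext i
  by_cases hi : i < a
  · rw [splice, if_pos hi]
    refine hN z hz _ hs i fun j hj => ?_
    simp only [mem_Icc] at hj
    by_cases hja : j < a
    · exact if_pos hja
    · exact (if_neg hja).trans (h ⟨by omega, by omega⟩).symm
  · rw [splice, if_neg hi]
    refine hN z' hz' _ hs i fun j hj => ?_
    simp only [mem_Icc] at hj
    by_cases hja : j < a
    · exact (if_pos hja).trans (h ⟨by omega, by omega⟩)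
    · exact if_neg hja

lemma splice_mem_and_map_splice {X : Set (ℤ → A)} {φ : (ℤ → A) → (ℤ → B)}
    {F : Finset (List A)} (hF : X = {x | ∀ u ∈ F, ∀ i : ℤ, ¬ OccursAt x u i}) {N : ℕ}
    (hN : IsBlockRadius X φ N) {z z' : ℤ → A} (hz : z ∈ X) (hz' : z' ∈ X) {a : ℤ}
    (h : EqOn z z' (Icc (a - (N + F.sup List.length : ℕ)) (a + (N + F.sup List.length : ℕ)))) :
    splice z z' a ∈ X ∧ φ (splice z z' a) = splice (φ z) (φ z') a := by
  have hs : splice z z' a ∈ X := splice_mem_of_forbidden hF hz hz'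
    (h.mono (Ico_subset_Icc_self.trans (Icc_subset_Icc (by omega) (by push_cast; omega))))
  exact ⟨hs, hN.map_splice hz hz' hs
    (h.mono (Icc_subset_Icc (by push_cast; omega) (by push_cast; omega)))⟩

end Splice

theorem open_on_SFT_has_uniformLiftingLength_general
    {A B : Type*} [Fintype A]
    (X : Set (ℤ → A)) (Y : Set (ℤ → B)) (φ : (ℤ → A) → (ℤ → B))
    (hX : IsSFT X) (hY : IsShiftSpace Y) (hφ : IsCode X Y φ)
    (hopen : IsOpenCode X Y φ) :
    HasUniformLiftingLength X Y φ := by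
  obtain ⟨⟨-, hXcl, hXsh⟩, F, hF⟩ := hX
  obtain ⟨-, hc, hcomm⟩ := hφ
  obtain ⟨N, hN⟩ := exists_isBlockRadius hXcl hXsh hc hcomm
  set R := N + F.sup List.length
  obtain ⟨m, hm⟩ := hopen.exists_lift_radius_at hXcl hXsh hY.2.2 hc hcomm R
  refine ⟨max m R, fun k x hx y hy hxy => ?_⟩
  have hyx : ∀ c : ℤ, |c| ≤ k → EqOn y (φ x) (Icc (c - m) (c + m)) := fun c hck i hi =>
    (hxy i (abs_le.2 ⟨by grind, by grind⟩)).symm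
  obtain ⟨uR, huR, huRx, hφuR⟩ := hm k x hx y hy (hyx k (by simp))
  obtain ⟨uL, huL, huLx, hφuL⟩ := hm (-k) x hx y hy (hyx (-k) (by simp))
  obtain ⟨hw, hφw⟩ := splice_mem_and_map_splice hF hN hx huR huRx.symm
  have hwx : EqOn (splice x uR k) x (Iic (k + R)) :=
    eqOn_splice_of_eqOn (huRx.mono (Icc_subset_Icc (by omega) le_rfl))
  obtain ⟨hx', hφx'⟩ := splice_mem_and_map_splice hF hN huL hw
    (huLx.trans (hwx.symm.mono fun _ hi => by simp only [mem_Icc, mem_Iic] at hi ⊢; omega))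
  refine ⟨_, hx', fun i hi => ?_, ?_⟩
  · rw [abs_le] at hi
    exact (eqOn_splice_right _ _ _ hi.1).trans (hwx (show i ≤ _ by omega))
  · rw [hφx', hφw, hφuL, hφuR]
    funext i
    simp only [splice]
    split_ifs with h₁ h₂ <;> first | rfl | exact hxy i (abs_le.2 ⟨by omega, by omega⟩)

/-- An open code on a shift of finite type has a uniform
lifting length. -/
theorem open_on_SFT_has_uniformLiftingLength
    {A B : Type*} [Fintype A] [Fintype B]
    (X : Set (ℤ → A)) (Y : Set (ℤ → B)) (φ : (ℤ → A) → (ℤ → B))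
    (hX : IsSFT X) (hY : IsShiftSpace Y) (hφ : IsCode X Y φ)
    (hopen : IsOpenCode X Y φ) :
    HasUniformLiftingLength X Y φ :=
  open_on_SFT_has_uniformLiftingLength_general X Y φ hX hY hφ hopen
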